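/- For every j ∈ [n−1] and every τ ∈ ℝ, the matrix I − τ · e^{(p)}_{(j,j)} belongs to ⟨p⟩^+ if and only if 0 ≤ τ ≤ min(1, 1/r_j). Moreover, at the extreme value τ = min(1, 1/r_j), the (n,j) entry of I − τ · e^{(p)}_{(j,j)} equals the Metropolis acceptance ratio min(1, r_j). -/

import Mathlib

open Matrix

/-- The ratio `r_j := p_j / p_n` for `j ∈ [n-1]`, with the state space `[n]` modeled as
`Fin (m+1)`, the last state `n` as `Fin.last m`, and `[n-1]` as `Fin m` via `Fin.castSucc`. -/
noncomputable def r (m : ℕ) (p : Fin (m + 1) → ℝ) (j : Fin m) : ℝ :=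
  p j.castSucc / p (Fin.last m)

/-- `e^{(p)}_{(j,k)} := (e_j − r_j e_n)(e_k^T − e_n^T)` as an `(m+1) × (m+1)` real matrix. -/
noncomputable def Ep (m : ℕ) (p : Fin (m + 1) → ℝ) (j k : Fin m) :
    Matrix (Fin (m + 1)) (Fin (m + 1)) ℝ :=
  Matrix.vecMulVec
    (fun a => (if a = j.castSucc then (1 : ℝ) else 0) -
      r m p j * (if a = Fin.last m then (1 : ℝ) else 0))
    (fun b => (if b = k.castSucc then (1 : ℝ) else 0) - (if b = Fin.last m then (1 : ℝ) else 0))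

/-
`Ep m p j k` is the rank-one matrix `u vᵀ` with `v ⬝ᵥ 1 = 0` and `p ⬝ᵥ u = 0`, so `1 - τ • Ep m p j j`
has unit row sums and fixes `p` for every `τ`; only nonnegativity constrains `τ`. The entries that
differ from the identity form the block on `{j, n}`, namely `1 - τ`, `τ`, `τ r_j` and `1 - τ r_j`,
and at `τ = min 1 (1 / r_j)` the entry `τ r_j` becomes `min 1 r_j`.
-/

namespace Matrix

variable {ι α : Type*} [Fintype ι] [DecidableEq ι] [CommRing α]

theorem one_sub_smul_mulVec_eq_self {A : Matrix ι ι α} {w : ι → α} (τ : α) (hA : A *ᵥ w = 0) :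
    (1 - τ • A) *ᵥ w = w := by
  rw [sub_mulVec, one_mulVec, smul_mulVec, hA, smul_zero, sub_zero]

theorem vecMul_one_sub_smul_eq_self {A : Matrix ι ι α} {w : ι → α} (τ : α) (hA : w ᵥ* A = 0) :
    w ᵥ* (1 - τ • A) = w := by
  rw [vecMul_sub, vecMul_one, vecMul_smul, hA, smul_zero, sub_zero]

end Matrix

section Ep

variable {m : ℕ} (p : Fin (m + 1) → ℝ) (j k : Fin m)

theorem Ep_mulVec_one : Ep m p j k *ᵥ (fun _ => 1) = 0 := by
  rw [Ep, vecMulVec_mulVec]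
  simp [dotProduct, Finset.sum_sub_distrib]

theorem vecMul_Ep (hp : p (Fin.last m) ≠ 0) : p ᵥ* Ep m p j k = 0 := by
  rw [Ep, vecMul_vecMulVec]
  simp [dotProduct, mul_sub, Finset.sum_sub_distrib, r, mul_div_cancel₀ _ hp]

theorem one_sub_smul_Ep_nonneg_iff (τ : ℝ) (hr : 0 ≤ r m p j) :
    (∀ a b, 0 ≤ (1 - τ • Ep m p j j) a b) ↔ 0 ≤ τ ∧ τ ≤ 1 ∧ τ * r m p j ≤ 1 := by
  have hjl : j.castSucc ≠ Fin.last m := (Fin.castSucc_lt_last j).ne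
  simp only [Ep, Matrix.sub_apply, Matrix.smul_apply, one_apply, vecMulVec_apply, smul_eq_mul]
  constructor
  · intro h
    have hjl' := h j.castSucc (Fin.last m)
    have hjj := h j.castSucc j.castSucc
    have hll := h (Fin.last m) (Fin.last m)
    simp only [hjl, hjl.symm, ↓reduceIte, mul_zero, sub_zero, zero_sub, mul_neg, mul_one,
      sub_neg_eq_add, zero_add, sub_nonneg, neg_neg] at hjl' hjj hll
    exact ⟨hjl', hjj, hll⟩
  · rintro ⟨h0, h1, hr1⟩ a b
    split_ifs <;> subst_vars <;> simp_all [mul_nonneg h0 hr]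

theorem one_sub_smul_Ep_apply_last_castSucc (τ : ℝ) :
    (1 - τ • Ep m p j j) (Fin.last m) j.castSucc = τ * r m p j := by
  have hjl : j.castSucc ≠ Fin.last m := (Fin.castSucc_lt_last j).ne
  simp [Ep, vecMulVec_apply, hjl.symm]

end Ep

theorem le_min_one_one_div_iff {τ R : ℝ} (hR : 0 < R) :
    τ ≤ min 1 (1 / R) ↔ τ ≤ 1 ∧ τ * R ≤ 1 := by
  rw [le_min_iff, le_div_iff₀ hR]

theorem min_one_one_div_mul {R : ℝ} (hR : 0 < R) : min 1 (1 / R) * R = min 1 R := by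
  rw [min_mul_of_nonneg _ _ hR.le, one_mul, one_div_mul_cancel hR.ne', min_comm]

theorem stmt11_general (m : ℕ) (p : Fin (m + 1) → ℝ)
    (hp : ∀ a, 0 < p a) (j : Fin m) :
    (∀ τ : ℝ,
      ((∀ a b, 0 ≤ ((1 : Matrix (Fin (m + 1)) (Fin (m + 1)) ℝ) - τ • Ep m p j j) a b) ∧
        ((1 : Matrix (Fin (m + 1)) (Fin (m + 1)) ℝ) - τ • Ep m p j j).mulVec
          (fun _ => (1 : ℝ)) = (fun _ => (1 : ℝ)) ∧
        Matrix.vecMul p ((1 : Matrix (Fin (m + 1)) (Fin (m + 1)) ℝ) - τ • Ep m p j j) = p) ↔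
      (0 ≤ τ ∧ τ ≤ min 1 (1 / r m p j))) ∧
    ((1 : Matrix (Fin (m + 1)) (Fin (m + 1)) ℝ) - min 1 (1 / r m p j) • Ep m p j j)
        (Fin.last m) j.castSucc = min 1 (r m p j) := by
  have hr : 0 < r m p j := div_pos (hp _) (hp _)
  refine ⟨fun τ => ?_, ?_⟩
  · rw [one_sub_smul_Ep_nonneg_iff p j τ hr.le, le_min_one_one_div_iff hr,
      one_sub_smul_mulVec_eq_self τ (Ep_mulVec_one p j j),
      vecMul_one_sub_smul_eq_self τ (vecMul_Ep p j j (hp _).ne')]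
    simp only [and_true]
  · rw [one_sub_smul_Ep_apply_last_castSucc, min_one_one_div_mul hr]

/-- `I − τ e^{(p)}_{(j,j)} ∈ ⟨p⟩⁺` iff `0 ≤ τ ≤ min(1, 1/r_j)`; moreover at
`τ = min(1, 1/r_j)` the `(n, j)` entry of `I − τ e^{(p)}_{(j,j)}` is the Metropolis
acceptance ratio `min(1, r_j)`. -/
theorem stmt11 (m : ℕ) (hm : 1 ≤ m) (p : Fin (m + 1) → ℝ)
    (hp : ∀ a, 0 < p a) (hsum : ∑ a, p a = 1) (j : Fin m) :
    (∀ τ : ℝ,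
      ((∀ a b, 0 ≤ ((1 : Matrix (Fin (m + 1)) (Fin (m + 1)) ℝ) - τ • Ep m p j j) a b) ∧
        ((1 : Matrix (Fin (m + 1)) (Fin (m + 1)) ℝ) - τ • Ep m p j j).mulVec
          (fun _ => (1 : ℝ)) = (fun _ => (1 : ℝ)) ∧
        Matrix.vecMul p ((1 : Matrix (Fin (m + 1)) (Fin (m + 1)) ℝ) - τ • Ep m p j j) = p) ↔
      (0 ≤ τ ∧ τ ≤ min 1 (1 / r m p j))) ∧
    ((1 : Matrix (Fin (m + 1)) (Fin (m + 1)) ℝ) - min 1 (1 / r m p j) • Ep m p j j)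
        (Fin.last m) j.castSucc = min 1 (r m p j) :=
  stmt11_general m p hp j
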